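/- arXiv:1609.07363 — 2 statements merged into one kernel-verified Lean document; each statement's English description precedes it below -/
import Mathlib

section
/- Assume conditions (A1) and (A2) hold for the biweight loss with parameter K. Let Z'_1, Z'_2, … be an independent copy of the noise sequence Z_1, Z_2, … and let S'_l(θ) = Σ_{i=1}^l [γ(Z'_i − θ) − γ(Z'_i)]. Then for any Δ > 0 there exist strictly positive constants C₁, C₂ and α such that for every l ≥ 1, P( inf_{θ∈ℝ} { S_l(θ) + S'_l(θ−Δ) } ≤ lα ) ≤ C₁ exp(−C₂ l). -/
/-!
If `|θ| ≥ 2K` then `|z| ≤ K` forces `|z - θ| ≥ K`, so the increment `γ(z - θ) - γ(z)` is at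
least `K² 1{|z| ≤ K} - γ(z)`, a bound free of `θ` whose mean is the positive quantity of (A2).
For `θ` and `θ - Δ` both that far out, the contrast is thus bounded below by one sum of `2l`
bounded independent variables. The remaining `θ` lie in a compact interval, on which the
contrast is `4Kl`-Lipschitz, so finitely many grid points suffice; at each of them (A1) gives
mean at least `l min (c₁ (Δ/2)²) c₂`, since `θ` or `θ - Δ` is at distance at least `Δ/2` from
`0`. Hoeffding's inequality bounds each of these finitely many lower deviations by `exp (-C l)`.
-/

open MeasureTheory ProbabilityTheory Finset

noncomputable section

def biweight (K y : ℝ) : ℝ := min (y ^ 2) (K ^ 2)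

def biweightIncr (K θ z : ℝ) : ℝ := biweight K (z - θ) - biweight K z

def biweightFarBound (K z : ℝ) : ℝ := (if |z| ≤ K then K ^ 2 else 0) - biweight K z

def twoSampleContrast (K Δ : ℝ) (s : Finset ℕ) (z z' : ℕ → ℝ) (θ : ℝ) : ℝ :=
  ∑ i ∈ s, biweightIncr K θ (z i) + ∑ i ∈ s, biweightIncr K (θ - Δ) (z' i)

end

section Deterministic

variable {K y : ℝ}

lemma biweight_nonneg (K y : ℝ) : 0 ≤ biweight K y := le_min (sq_nonneg y) (sq_nonneg K)

lemma biweight_le (K y : ℝ) : biweight K y ≤ K ^ 2 := min_le_right _ _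

lemma biweight_of_abs_le (hy : |y| ≤ K) : biweight K y = y ^ 2 :=
  min_eq_left (sq_le_sq.2 (hy.trans (le_abs_self K)))

lemma biweight_of_le_abs (hK : 0 ≤ K) (hy : K ≤ |y|) : biweight K y = K ^ 2 :=
  min_eq_right (sq_le_sq.2 (by rwa [abs_of_nonneg hK]))

lemma biweight_eq_sq_min_abs (hK : 0 ≤ K) (y : ℝ) : biweight K y = min |y| K ^ 2 := by
  rcases le_total |y| K with h | h
  · rw [biweight_of_abs_le h, min_eq_left h, sq_abs]
  · rw [biweight_of_le_abs hK h, min_eq_right h]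

lemma abs_biweight_sub_biweight_le (hK : 0 ≤ K) (y y' : ℝ) :
    |biweight K y - biweight K y'| ≤ 2 * K * |y - y'| := by
  rw [biweight_eq_sq_min_abs hK, biweight_eq_sq_min_abs hK, sq_sub_sq, abs_mul]
  have h_sum : |min |y| K + min |y'| K| ≤ 2 * K := by
    rw [abs_of_nonneg (by positivity)]
    linarith [min_le_right |y| K, min_le_right |y'| K]
  have h_diff : |min |y| K - min |y'| K| ≤ |y - y'| :=
    (abs_min_sub_min_le_max _ _ _ _).trans
      (by simpa using abs_abs_sub_abs_le_abs_sub y y')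
  gcongr

lemma abs_biweightIncr_le (K θ z : ℝ) : |biweightIncr K θ z| ≤ K ^ 2 :=
  abs_sub_le_of_nonneg_of_le (biweight_nonneg _ _) (biweight_le _ _)
    (biweight_nonneg _ _) (biweight_le _ _)

lemma abs_biweightIncr_sub_le (hK : 0 ≤ K) (θ θ' z : ℝ) :
    |biweightIncr K θ z - biweightIncr K θ' z| ≤ 2 * K * |θ - θ'| := by
  simpa [biweightIncr, abs_sub_comm θ'] using abs_biweight_sub_biweight_le hK (z - θ) (z - θ')

lemma abs_biweightFarBound_le (K z : ℝ) : |biweightFarBound K z| ≤ K ^ 2 :=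
  abs_sub_le_of_nonneg_of_le (by split_ifs <;> positivity)
    (by split_ifs <;> [exact le_rfl; positivity]) (biweight_nonneg _ _) (biweight_le _ _)

lemma biweightFarBound_le_biweightIncr (hK : 0 ≤ K) {θ : ℝ} (hθ : 2 * K ≤ |θ|) (z : ℝ) :
    biweightFarBound K z ≤ biweightIncr K θ z := by
  unfold biweightFarBound biweightIncr
  split_ifs with hz
  · -- `|z| ≤ K` puts `z - θ` outside `[-K, K]`
    have : K ≤ |z - θ| := by linarith [abs_sub_abs_le_abs_sub θ z, abs_sub_comm θ z]
    rw [biweight_of_le_abs hK this]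
  · linarith [biweight_nonneg K (z - θ)]

lemma biweightFarBound_eq (hK : 0 ≤ K) (z : ℝ) :
    biweightFarBound K z =
      K ^ 2 - (if K < |z| then 2 * K ^ 2 else 0) - (if |z| ≤ K then z ^ 2 else 0) := by
  unfold biweightFarBound
  by_cases hz : |z| ≤ K
  · simp [hz, not_lt.2 hz, biweight_of_abs_le hz]
  · simp [hz, not_le.1 hz, biweight_of_le_abs hK (not_le.1 hz).le]
    ring

lemma abs_sum_biweightIncr_sub_le {ι : Type*} (hK : 0 ≤ K) (s : Finset ι) (z : ι → ℝ)
    (θ θ' : ℝ) :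
    |∑ i ∈ s, biweightIncr K θ (z i) - ∑ i ∈ s, biweightIncr K θ' (z i)| ≤
      #s * (2 * K * |θ - θ'|) := by
  rw [← sum_sub_distrib]
  refine (abs_sum_le_sum_abs _ _).trans ?_
  simpa using sum_le_card_nsmul s _ _ fun i _ => abs_biweightIncr_sub_le hK θ θ' (z i)

variable {Δ : ℝ} {s : Finset ℕ} {z z' : ℕ → ℝ}

lemma abs_twoSampleContrast_sub_le (hK : 0 ≤ K) (θ θ' : ℝ) :
    |twoSampleContrast K Δ s z z' θ - twoSampleContrast K Δ s z z' θ'| ≤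
      #s * (4 * K * |θ - θ'|) := by
  have h₁ := abs_sum_biweightIncr_sub_le hK s z θ θ'
  have h₂ := abs_sum_biweightIncr_sub_le hK s z' (θ - Δ) (θ' - Δ)
  rw [sub_sub_sub_cancel_right] at h₂
  unfold twoSampleContrast
  rw [add_sub_add_comm]
  refine (abs_add_le _ _).trans ?_
  linarith

lemma le_twoSampleContrast_of_cover (hK : 0 ≤ K) {G : Finset ℝ} {c δ : ℝ} (hδ : 0 ≤ δ)
    (hG : Set.Icc (-(2 * K + |Δ|)) (2 * K + |Δ|) ⊆ ⋃ g ∈ G, Metric.ball g δ)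
    (hfar : #s * c < ∑ i ∈ s, biweightFarBound K (z i) + ∑ i ∈ s, biweightFarBound K (z' i))
    (hgrid : ∀ g ∈ G, #s * c < twoSampleContrast K Δ s z z' g) (θ : ℝ) :
    #s * (c - 4 * K * δ) ≤ twoSampleContrast K Δ s z z' θ := by
  have h_slack : 0 ≤ (#s : ℝ) * (4 * K * δ) := by positivity
  by_cases hθ : 2 * K ≤ |θ| ∧ 2 * K ≤ |θ - Δ|
  · have h₁ := sum_le_sum fun i (_ : i ∈ s) =>
      biweightFarBound_le_biweightIncr hK hθ.1 (z i)
    have h₂ := sum_le_sum fun i (_ : i ∈ s) =>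
      biweightFarBound_le_biweightIncr hK hθ.2 (z' i)
    unfold twoSampleContrast
    linarith
  · have hθT : θ ∈ Set.Icc (-(2 * K + |Δ|)) (2 * K + |Δ|) := by
      rw [Set.mem_Icc, ← abs_le]
      rw [not_and_or, not_le, not_le] at hθ
      rcases hθ with h | h
      · linarith [abs_nonneg Δ]
      · linarith [abs_sub_abs_le_abs_sub θ Δ]
    obtain ⟨g, hg, hθg⟩ := Set.mem_iUnion₂.1 (hG hθT)
    have hLip := abs_twoSampleContrast_sub_le (Δ := Δ) (s := s) (z := z) (z' := z') hK g θ
    rw [abs_sub_comm g θ] at hLip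
    have hδg : (#s : ℝ) * (4 * K * |θ - g|) ≤ #s * (4 * K * δ) := by
      gcongr; exact (Metric.mem_ball.1 hθg).le
    linarith [hgrid g hg, (abs_le.1 hLip).2]

lemma setOf_iInf_twoSampleContrast_le_subset {Ω : Type*} {Z Z' : ℕ → Ω → ℝ} (hK : 0 < K)
    {a : ℝ} (ha : 0 < a) {G : Finset ℝ}
    (hG : Set.Icc (-(2 * K + |Δ|)) (2 * K + |Δ|) ⊆ ⋃ g ∈ G, Metric.ball g (a / (16 * K)))
    (hs : s.Nonempty) :
    {ω | ⨅ θ, twoSampleContrast K Δ s (Z · ω) (Z' · ω) θ ≤ #s * (a / 8)} ⊆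
      {ω | ∑ i ∈ s, biweightFarBound K (Z i ω) + ∑ i ∈ s, biweightFarBound K (Z' i ω) ≤
          #s * a / 2} ∪
        ⋃ g ∈ G, {ω | twoSampleContrast K Δ s (Z · ω) (Z' · ω) g ≤ #s * a / 2} := by
  intro ω hω
  by_contra h
  simp only [Set.mem_union, Set.mem_iUnion, Set.mem_ofPred_eq, not_or, not_exists,
    not_le] at h hω
  have h_inf := le_ciInf (le_twoSampleContrast_of_cover (s := s) (z := (Z · ω))
    (z' := (Z' · ω)) (c := a / 2) hK.le (by positivity) hG (by linarith [h.1])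
    fun g hg => by linarith [h.2 g hg])
  have hδ : 4 * K * (a / (16 * K)) = a / 4 := by field_simp; ring
  have h_card : (0 : ℝ) < #s := by exact_mod_cast hs.card_pos
  rw [hδ] at h_inf
  nlinarith

lemma min_mul_half_sq_le_add {c₁ c₂ : ℝ} (hc₁ : 0 ≤ c₁) (hc₂ : 0 ≤ c₂) (θ Δ : ℝ) :
    min (c₁ * (Δ / 2) ^ 2) c₂ ≤ min (c₁ * θ ^ 2) c₂ + min (c₁ * (θ - Δ) ^ 2) c₂ := by
  have h_nonneg (x : ℝ) : 0 ≤ min (c₁ * x ^ 2) c₂ := le_min (by positivity) hc₂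
  have h_mono (x : ℝ) (hx : (Δ / 2) ^ 2 ≤ x ^ 2) :
      min (c₁ * (Δ / 2) ^ 2) c₂ ≤ min (c₁ * x ^ 2) c₂ :=
    min_le_min_right _ (mul_le_mul_of_nonneg_left hx hc₁)
  rcases le_total ((Δ / 2) ^ 2) (θ ^ 2) with h | h
  · linarith [h_mono θ h, h_nonneg (θ - Δ)]
  · -- `θ ^ 2 + (θ - Δ) ^ 2 = 2 (θ - Δ / 2) ^ 2 + Δ ^ 2 / 2`
    linarith [h_mono (θ - Δ) (by nlinarith [sq_nonneg (2 * θ - Δ)]), h_nonneg θ]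

end Deterministic

lemma measureReal_union_biUnion_le {α ι : Type*} [MeasurableSpace α] {μ : Measure α}
    {A : Set α} {G : Finset ι} {E : ι → Set α} {r : ℝ} (hA : μ.real A ≤ r)
    (hE : ∀ g ∈ G, μ.real (E g) ≤ r) :
    μ.real (A ∪ ⋃ g ∈ G, E g) ≤ (#G + 1) * r := by
  have h := (measureReal_biUnion_finset_le G E).trans (sum_le_card_nsmul G _ r hE)
  rw [nsmul_eq_mul] at h
  linarith [measureReal_union_le (μ := μ) A (⋃ g ∈ G, E g)]

section Probability

variable {Ω : Type*} [MeasurableSpace Ω] {P : Measure Ω} [IsProbabilityMeasure P]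

lemma measurable_biweightIncr (K θ : ℝ) : Measurable (biweightIncr K θ) := by
  unfold biweightIncr biweight
  fun_prop

lemma measurable_biweightFarBound (K : ℝ) : Measurable (biweightFarBound K) := by
  unfold biweightFarBound biweight
  exact (Measurable.ite (measurableSet_le measurable_id.abs measurable_const) measurable_const
    measurable_const).sub (by fun_prop)

lemma integral_biweightIncr {K : ℝ} {W : Ω → ℝ} (hW : Measurable W) (θ : ℝ) :
    ∫ ω, biweightIncr K θ (W ω) ∂P =
      ∫ ω, biweight K (W ω - θ) ∂P - ∫ ω, biweight K (W ω) ∂P := by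
  have h_int (V : Ω → ℝ) (hV : Measurable V) : Integrable (fun ω => biweight K (V ω)) P :=
    .of_bound (by unfold biweight; fun_prop) (K ^ 2) <| ae_of_all _ fun ω => by
      rw [Real.norm_of_nonneg (biweight_nonneg _ _)]; exact biweight_le _ _
  exact integral_sub (h_int _ (hW.sub_const θ)) (h_int _ hW)

lemma integral_biweightFarBound {K : ℝ} (hK : 0 ≤ K) {W : Ω → ℝ} (hW : Measurable W) :
    ∫ ω, biweightFarBound K (W ω) ∂P =
      K ^ 2 * (1 - 2 * (P {ω | K < |W ω|}).toReal) -
        ∫ ω, (if |W ω| ≤ K then W ω ^ 2 else 0) ∂P := by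
  have h_far : MeasurableSet {ω | K < |W ω|} := measurableSet_lt measurable_const hW.abs
  have h_near : Integrable (fun ω => if |W ω| ≤ K then W ω ^ 2 else 0) P :=
    .of_bound (Measurable.ite (measurableSet_le hW.abs measurable_const)
      (hW.pow_const 2) measurable_const).aestronglyMeasurable (K ^ 2) <| ae_of_all _ fun ω => by
        split_ifs with h
        · rw [Real.norm_eq_abs, abs_sq, ← sq_abs]; exact pow_le_pow_left₀ (abs_nonneg _) h 2
        · simpa using sq_nonneg K
  have h_eq : (fun ω => biweightFarBound K (W ω)) = fun ω =>
      K ^ 2 - {ω | K < |W ω|}.indicator (fun _ => 2 * K ^ 2) ω -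
        (if |W ω| ≤ K then W ω ^ 2 else 0) := by
    funext ω
    simp [biweightFarBound_eq hK, Set.indicator_apply]
  rw [h_eq, integral_sub _ h_near, integral_sub (integrable_const _)
    ((integrable_const _).indicator h_far), integral_const, integral_indicator_const _ h_far,
    probReal_univ, smul_eq_mul, smul_eq_mul, measureReal_def]
  · ring
  · exact (integrable_const _).sub ((integrable_const _).indicator h_far)

lemma measureReal_sum_le_sum_integral_sub_le {ι : Type*} {X : ι → Ω → ℝ}
    (h_indep : iIndepFun X P) (hX : ∀ i, Measurable (X i)) {B : ℝ}
    (hB : ∀ i ω, |X i ω| ≤ B)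
    (s : Finset ι) {ε : ℝ} (hε : 0 ≤ ε) :
    P.real {ω | ∑ i ∈ s, X i ω ≤ ∑ i ∈ s, P[X i] - ε} ≤
      Real.exp (-ε ^ 2 / (2 * (#s * B ^ 2))) := by
  have h_subG (i : ι) (_ : i ∈ s) :
      HasSubgaussianMGF (fun ω => P[X i] - X i ω) ((‖B - -B‖₊ / 2) ^ 2) P := by
    convert (hasSubgaussianMGF_of_mem_Icc (μ := P) (hX i).aemeasurable
      (ae_of_all _ fun ω => abs_le.1 (hB i ω))).neg using 1
    ext ω
    simp
  have h := HasSubgaussianMGF.measure_sum_ge_le_of_iIndepFun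
    (h_indep.comp (fun i x => P[X i] - x) fun i => by fun_prop) h_subG hε
  convert h using 3
  · ext ω
    simp only [Function.comp_apply, sum_sub_distrib]
    constructor <;> intro <;> linarith
  · push_cast
    rw [sum_const, nsmul_eq_mul, Real.norm_eq_abs, sub_neg_eq_add, ← two_mul, abs_mul,
      abs_two, mul_div_cancel_left₀ _ two_ne_zero, sq_abs]

lemma measureReal_twoSample_sum_le {Z Z' : ℕ → Ω → ℝ} (hZ : ∀ i, Measurable (Z i))
    (hZ' : ∀ i, Measurable (Z' i)) (h_indep : iIndepFun (Sum.elim Z Z') P)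
    (hZ_ident : ∀ i, IdentDistrib (Z i) (Z 0) P P)
    (hZ'_ident : ∀ i, IdentDistrib (Z' i) (Z 0) P P)
    {f g : ℝ → ℝ} (hf : Measurable f) (hg : Measurable g) {B : ℝ} (hfB : ∀ x, |f x| ≤ B)
    (hgB : ∀ x, |g x| ≤ B) (s : Finset ℕ) {a : ℝ} (ha : 0 ≤ a)
    (h_mean : a ≤ ∫ ω, f (Z 0 ω) ∂P + ∫ ω, g (Z 0 ω) ∂P) :
    P.real {ω | ∑ i ∈ s, f (Z i ω) + ∑ i ∈ s, g (Z' i ω) ≤ #s * a / 2} ≤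
      Real.exp (-(a ^ 2 / (16 * B ^ 2)) * #s) := by
  set X : ℕ ⊕ ℕ → Ω → ℝ := fun k =>
    Sum.elim (fun _ => f) (fun _ => g) k ∘ Sum.elim Z Z' k
  have hX_indep : iIndepFun X P := h_indep.comp _ fun k => by cases k <;> assumption
  have hX (k : ℕ ⊕ ℕ) : Measurable (X k) := by
    cases k
    exacts [hf.comp (hZ _), hg.comp (hZ' _)]
  have hXB (k : ℕ ⊕ ℕ) (ω : Ω) : |X k ω| ≤ B := by
    cases k
    exacts [hfB _, hgB _]
  have h_sum (ω : Ω) : ∑ k ∈ s.disjSum s, X k ω =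
      ∑ i ∈ s, f (Z i ω) + ∑ i ∈ s, g (Z' i ω) := sum_disjSum _ _ _
  have h_int : ∑ k ∈ s.disjSum s, P[X k] =
      #s * (∫ ω, f (Z 0 ω) ∂P + ∫ ω, g (Z 0 ω) ∂P) := by
    have h_inl (i : ℕ) (_ : i ∈ s) : P[X (.inl i)] = ∫ ω, f (Z 0 ω) ∂P :=
      ((hZ_ident i).comp hf).integral_eq
    have h_inr (i : ℕ) (_ : i ∈ s) : P[X (.inr i)] = ∫ ω, g (Z 0 ω) ∂P :=
      ((hZ'_ident i).comp hg).integral_eq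
    rw [sum_disjSum, sum_congr rfl h_inl, sum_congr rfl h_inr]
    simp [mul_add]
  have h_mean' := mul_le_mul_of_nonneg_left h_mean (Nat.cast_nonneg (α := ℝ) #s)
  calc _ ≤ P.real {ω | ∑ k ∈ s.disjSum s, X k ω ≤
        ∑ k ∈ s.disjSum s, P[X k] - #s * a / 2} :=
        measureReal_mono fun ω hω => by
          simp only [Set.mem_ofPred_eq, h_sum, h_int] at hω ⊢
          linarith
    _ ≤ _ := measureReal_sum_le_sum_integral_sub_le hX_indep hX hXB _ (by positivity)
    _ = _ := by
        rw [card_disjSum]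
        push_cast
        congr 1
        field_simp
        ring

end Probability

theorem inf_two_sample_sum_lower_tail_general
    {Ω : Type*} [MeasurableSpace Ω] (P : Measure Ω) [IsProbabilityMeasure P]
    (K : ℝ) (hK : 0 < K)
    (Z Z' : ℕ → Ω → ℝ)
    (hZmeas : ∀ i, Measurable (Z i)) (hZ'meas : ∀ i, Measurable (Z' i))
    -- the two sequences together form an independent family, all with the
    -- distribution of `Z 0`
    (hindep : iIndepFun (Sum.elim Z Z') P)
    (hZident : ∀ i, IdentDistrib (Z i) (Z 0) P P)
    (hZ'ident : ∀ i, IdentDistrib (Z' i) (Z 0) P P)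
    -- Condition (A1)
    (c₁ c₂ : ℝ) (hc₁ : 0 < c₁) (hc₂ : 0 < c₂)
    (hA1 : ∀ θ : ℝ,
      (∫ ω, min ((Z 0 ω - (0 : ℝ)) ^ 2) (K ^ 2) ∂P) + min (c₁ * θ ^ 2) c₂ ≤
        ∫ ω, min ((Z 0 ω - θ) ^ 2) (K ^ 2) ∂P)
    -- Condition (A2)
    (hA2 : 0 < K ^ 2 * (1 - 2 * (P {ω | K < |Z 0 ω|}).toReal) -
        ∫ ω, (if |Z 0 ω| ≤ K then (Z 0 ω) ^ 2 else 0) ∂P)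
    (Δ : ℝ) (hΔ : 0 < Δ) :
    ∃ C₁ C₂ α : ℝ, 0 < C₁ ∧ 0 < C₂ ∧ 0 < α ∧
      ∀ l : ℕ, 1 ≤ l →
        (P {ω | (⨅ θ : ℝ,
            ((∑ i ∈ Finset.Icc 1 l,
              (min ((Z i ω - θ) ^ 2) (K ^ 2) - min ((Z i ω) ^ 2) (K ^ 2))) +
             ∑ i ∈ Finset.Icc 1 l,
              (min ((Z' i ω - (θ - Δ)) ^ 2) (K ^ 2) - min ((Z' i ω) ^ 2) (K ^ 2)))) ≤
              (l : ℝ) * α}).toReal ≤ C₁ * Real.exp (-C₂ * l) := by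
  have hβ : 0 < ∫ ω, biweightFarBound K (Z 0 ω) ∂P := by
    rwa [integral_biweightFarBound hK.le (hZmeas 0)]
  set β := ∫ ω, biweightFarBound K (Z 0 ω) ∂P
  set a := min (2 * β) (min (c₁ * (Δ / 2) ^ 2) c₂)
  have ha : 0 < a := lt_min (by positivity) (lt_min (by positivity) hc₂)
  have h_incr_mean (θ : ℝ) :
      min (c₁ * θ ^ 2) c₂ ≤ ∫ ω, biweightIncr K θ (Z 0 ω) ∂P := by
    rw [integral_biweightIncr (hZmeas 0)]
    simpa [biweight, le_sub_iff_add_le'] using hA1 θ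
  obtain ⟨G, -, hG⟩ :=
    (isCompact_Icc (a := -(2 * K + |Δ|)) (b := 2 * K + |Δ|)).elim_nhds_subcover
      (fun g => Metric.ball g (a / (16 * K))) fun g _ => Metric.ball_mem_nhds g (by positivity)
  refine ⟨#G + 1, a ^ 2 / (16 * (K ^ 2) ^ 2), a / 8, by positivity, by positivity, by positivity,
    fun l hl => ?_⟩
  set s := Finset.Icc 1 l
  have hs : (#s : ℝ) = l := by simp [s]
  show P.real {ω | ⨅ θ, twoSampleContrast K Δ s (Z · ω) (Z' · ω) θ ≤ l * (a / 8)} ≤ _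
  rw [← hs]
  refine (measureReal_mono (setOf_iInf_twoSampleContrast_le_subset hK ha hG
    (nonempty_Icc.2 hl))).trans (measureReal_union_biUnion_le ?_ fun g _ => ?_)
  · exact measureReal_twoSample_sum_le hZmeas hZ'meas hindep hZident hZ'ident
      (measurable_biweightFarBound K) (measurable_biweightFarBound K)
      (abs_biweightFarBound_le K) (abs_biweightFarBound_le K) s ha.le
      (by linarith [min_le_left (2 * β) (min (c₁ * (Δ / 2) ^ 2) c₂)])
  · exact measureReal_twoSample_sum_le hZmeas hZ'meas hindep hZident hZ'ident
      (measurable_biweightIncr K g) (measurable_biweightIncr K (g - Δ))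
      (abs_biweightIncr_le K g) (abs_biweightIncr_le K (g - Δ)) s ha.le
      (by linarith [min_le_right (2 * β) (min (c₁ * (Δ / 2) ^ 2) c₂),
        min_mul_half_sq_le_add hc₁.le hc₂.le g Δ, h_incr_mean g, h_incr_mean (g - Δ)])

/-- Lemma 2 of the paper: under conditions (A1) and (A2) for the biweight loss with
parameter `K`, for any `Δ > 0` there are strictly positive constants `C₁, C₂, α` such
that for every `l ≥ 1`,
`P( inf_θ { S_l(θ) + S'_l(θ−Δ) } ≤ lα ) ≤ C₁ exp(−C₂ l)`,
where `S_l(θ) = Σ_{i=1}^l [min{(Z_i−θ)², K²} − min{Z_i², K²}]` and `S'_l` is the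
analogous sum for an independent copy `Z'` of the noise sequence. -/
theorem inf_two_sample_sum_lower_tail
    {Ω : Type*} [MeasurableSpace Ω] (P : Measure Ω) [IsProbabilityMeasure P]
    (K : ℝ) (hK : 0 < K)
    (Z Z' : ℕ → Ω → ℝ)
    (hZmeas : ∀ i, Measurable (Z i)) (hZ'meas : ∀ i, Measurable (Z' i))
    -- the two sequences together form an independent family, all with the
    -- distribution of `Z 0`
    (hindep : iIndepFun (Sum.elim Z Z') P)
    (hZident : ∀ i, IdentDistrib (Z i) (Z 0) P P)
    (hZ'ident : ∀ i, IdentDistrib (Z' i) (Z 0) P P)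
    -- Condition (A1)
    (c₁ c₂ : ℝ) (hc₁ : 0 < c₁) (hc₂ : 0 < c₂)
    (hA1min : ∀ θ : ℝ,
      (∫ ω, min ((Z 0 ω - (0 : ℝ)) ^ 2) (K ^ 2) ∂P) ≤
        ∫ ω, min ((Z 0 ω - θ) ^ 2) (K ^ 2) ∂P)
    (hA1 : ∀ θ : ℝ,
      (∫ ω, min ((Z 0 ω - (0 : ℝ)) ^ 2) (K ^ 2) ∂P) + min (c₁ * θ ^ 2) c₂ ≤
        ∫ ω, min ((Z 0 ω - θ) ^ 2) (K ^ 2) ∂P)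
    -- Condition (A2)
    (hA2 : 0 < K ^ 2 * (1 - 2 * (P {ω | K < |Z 0 ω|}).toReal) -
        ∫ ω, (if |Z 0 ω| ≤ K then (Z 0 ω) ^ 2 else 0) ∂P)
    (Δ : ℝ) (hΔ : 0 < Δ) :
    ∃ C₁ C₂ α : ℝ, 0 < C₁ ∧ 0 < C₂ ∧ 0 < α ∧
      ∀ l : ℕ, 1 ≤ l →
        (P {ω | (⨅ θ : ℝ,
            ((∑ i ∈ Finset.Icc 1 l,
              (min ((Z i ω - θ) ^ 2) (K ^ 2) - min ((Z i ω) ^ 2) (K ^ 2))) +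
             ∑ i ∈ Finset.Icc 1 l,
              (min ((Z' i ω - (θ - Δ)) ^ 2) (K ^ 2) - min ((Z' i ω) ^ 2) (K ^ 2)))) ≤
              (l : ℝ) * α}).toReal ≤ C₁ * Real.exp (-C₂ * l) :=
  inf_two_sample_sum_lower_tail_general P K hK Z Z' hZmeas hZ'meas hindep hZident hZ'ident c₁ c₂ hc₁
    hc₂ hA1 hA2 Δ hΔ
end

section
/- For the biweight loss γ(y;θ) = min{(y−θ)², K²} with K > 0, for every 1 ≤ t ≤ n the function θ ↦ Q_t(θ) is piecewise quadratic on at most (2t+1)(2t−1) intervals; in particular the number of intervals needed is O(t²). -/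
open MeasureTheory Finset

/-- Cost of the segment consisting of data points `y_{s+1}, …, y_t`:
the infimum over the location parameter `θ` of the summed loss. -/
noncomputable def segCost (γ : ℝ → ℝ → ℝ) (y : ℕ → ℝ) (s t : ℕ) : ℝ :=
  ⨅ θ : ℝ, ∑ i ∈ Finset.Ioc s t, γ (y i) θ

/-- `τ : ℕ → ℕ` encodes an element of `S_t`: changepoints
`0 = τ 0 < τ 1 < ⋯ < τ k < t` (with `k = 0` meaning no changepoints). -/
def LastSeg (t k : ℕ) (τ : ℕ → ℕ) : Prop :=
  τ 0 = 0 ∧ τ k < t ∧ ∀ i < k, τ i < τ (i + 1)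

/-- `Q_t(θ)`: the minimum penalised cost of segmenting `y_{1:t}` conditional on the
most recent segment having location parameter `θ`. -/
noncomputable def condCost (γ : ℝ → ℝ → ℝ) (y : ℕ → ℝ) (β : ℝ) (t : ℕ) (θ : ℝ) : ℝ :=
  sInf {c : ℝ | ∃ (k : ℕ) (τ : ℕ → ℕ), LastSeg t k τ ∧
    c = (∑ i ∈ Finset.range k, (segCost γ y (τ i) (τ (i + 1)) + β)) +
        (∑ j ∈ Finset.Ioc (τ k) t, γ (y j) θ) + β}

/-- `f` is piecewise quadratic on (at most) `N` intervals: there are points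
`−∞ = a_0 < a_1 < ⋯ < a_{N−1} < a_N = ∞` such that on each `(a_{j}, a_{j+1}]`, `f`
agrees with a polynomial of degree at most `2`. -/
def IsPiecewiseQuad (f : ℝ → ℝ) (N : ℕ) : Prop :=
  ∃ a : ℕ → EReal, a 0 = ⊥ ∧ a N = ⊤ ∧ (∀ j < N, a j < a (j + 1)) ∧
    ∀ j < N, ∃ c₀ c₁ c₂ : ℝ, ∀ x : ℝ,
      a j < (x : EReal) → (x : EReal) ≤ a (j + 1) → f x = c₀ + c₁ * x + c₂ * x ^ 2

/-!
Off the `2t` points `y_j ± K` each loss `θ ↦ min ((y_j - θ)², K²)` is a fixed quadratic, and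
the pattern of losses in their quadratic regime changes only at these points, so it takes at most
`2t + 1` values. Grouping segmentations by their last changepoint `s < t`, `Q_t` is the minimum of
the `t` functions `F(s) + ∑_{s<j≤t} γ(y_j;θ) + β`, which are quadratics for a fixed pattern.
A minimum of `m` quadratics has at most `2m - 2` breakpoints: the quadratic with the largest
leading coefficient lies below all others exactly on an interval, which adds two breakpoints to
those of the minimum of the others. This gives at most `2t + (2t + 1)(2t - 2)` breakpoints, and as
`Q_t` is continuous it does not matter to which side of a breakpoint it is assigned.
-/

def IsQuadOn (f : ℝ → ℝ) (s : Set ℝ) : Prop :=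
  ∃ c₀ c₁ c₂ : ℝ, ∀ x ∈ s, f x = c₀ + c₁ * x + c₂ * x ^ 2

namespace IsQuadOn

variable {f g : ℝ → ℝ} {s : Set ℝ}

lemma congr (h : IsQuadOn g s) (hfg : Set.EqOn f g s) : IsQuadOn f s := by
  obtain ⟨c₀, c₁, c₂, hc⟩ := h
  exact ⟨c₀, c₁, c₂, fun x hx => (hfg hx).trans (hc x hx)⟩

lemma closure (h : IsQuadOn f s) (hf : Continuous f) : IsQuadOn f (closure s) := by
  obtain ⟨c₀, c₁, c₂, hc⟩ := h
  exact ⟨c₀, c₁, c₂, Set.EqOn.closure hc hf (by fun_prop)⟩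

end IsQuadOn

def IsPiecewiseQuadOff (f : ℝ → ℝ) (B : Finset ℝ) : Prop :=
  ∀ s : Set ℝ, s.OrdConnected → Disjoint s ↑B → IsQuadOn f s

def IsConstOff {α : Type*} (φ : ℝ → α) (B : Finset ℝ) : Prop :=
  ∀ s : Set ℝ, s.OrdConnected → Disjoint s ↑B → ∀ x ∈ s, ∀ z ∈ s, φ x = φ z

lemma Set.OrdConnected.subset_or_disjoint {α : Type*} [ConditionallyCompleteLinearOrder α]
    {W s : Set α} (hW : W.OrdConnected) (hs : s.OrdConnected) (hinf : sInf W ∉ s)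
    (hsup : sSup W ∉ s) : s ⊆ W ∨ Disjoint s W := by
  rw [or_iff_not_imp_right, Set.not_disjoint_iff]
  rintro ⟨x, hxs, hxW⟩ z hzs
  by_contra hzW
  rcases le_total x z with hxz | hzx
  · have hbdd : ∀ w ∈ W, w ≤ z := fun w hwW =>
      le_of_not_gt fun hzw => hzW (hW.out hxW hwW ⟨hxz, hzw.le⟩)
    exact hsup (hs.out hxs hzs ⟨le_csSup ⟨z, hbdd⟩ hxW, csSup_le ⟨x, hxW⟩ hbdd⟩)
  · have hbdd : ∀ w ∈ W, z ≤ w := fun w hwW =>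
      le_of_not_gt fun hwz => hzW (hW.out hwW hxW ⟨hwz.le, hzx⟩)
    exact hinf (hs.out hzs hxs ⟨le_csInf ⟨x, hxW⟩ hbdd, csInf_le ⟨z, hbdd⟩ hxW⟩)

lemma Set.OrdConnected.nonpos_iff_nonpos {h : ℝ → ℝ} {s : Set ℝ} (hs : s.OrdConnected)
    (hh : Continuous h) (h0 : ∀ x ∈ s, h x ≠ 0) {x z : ℝ} (hx : x ∈ s) (hz : z ∈ s) :
    h x ≤ 0 ↔ h z ≤ 0 := by
  have key : ∀ x ∈ s, ∀ z ∈ s, h x ≤ 0 → h z ≤ 0 := by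
    intro x hx z hz hxn
    by_contra! hzp
    obtain ⟨w, hw, hw0⟩ :=
      hs.isPreconnected.intermediate_value hx hz hh.continuousOn ⟨hxn, hzp.le⟩
    exact h0 w hw hw0
  exact ⟨key x hx z hz, key z hz x hx⟩

lemma ordConnected_setOf_quad_le {a₁ b₁ c₁ a₂ b₂ c₂ : ℝ} (hc : c₂ ≤ c₁) :
    {x : ℝ | a₁ + b₁ * x + c₁ * x ^ 2 ≤ a₂ + b₂ * x + c₂ * x ^ 2}.OrdConnected := by
  refine ⟨fun x hx w hw z ⟨hxz, hzw⟩ => ?_⟩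
  simp only [Set.mem_ofPred_eq] at *
  rcases (hxz.trans hzw).eq_or_lt with rfl | hxw
  · rwa [le_antisymm hzw hxz]
  -- the chord inequality of the convex difference, multiplied out
  have hchord :
      (w - x) * (a₁ + b₁ * z + c₁ * z ^ 2 - (a₂ + b₂ * z + c₂ * z ^ 2)) ≤ 0 := by
    nlinarith [mul_nonneg (mul_nonneg (sub_nonneg.2 hxz) (sub_nonneg.2 hzw)) (sub_nonneg.2 hc),
      mul_nonneg (sub_nonneg.2 hzw) (sub_nonneg.2 hx),
      mul_nonneg (sub_nonneg.2 hxz) (sub_nonneg.2 hw)]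
  nlinarith [sub_pos.2 hxw]

namespace IsPiecewiseQuadOff

variable {f f₁ f₂ : ℝ → ℝ} {B B₁ B₂ : Finset ℝ}

lemma mono {B' : Finset ℝ} (h : IsPiecewiseQuadOff f B) (hB : B ⊆ B') :
    IsPiecewiseQuadOff f B' :=
  fun s hs hdisj => h s hs (hdisj.mono_right (coe_subset.2 hB))

/-- When `{x | f₁ x ≤ f₂ x}` is empty or unbounded, the added `sInf`/`sSup` are junk values;
surplus breakpoints are harmless. -/
lemma min (h₁ : IsPiecewiseQuadOff f₁ B₁) (h₂ : IsPiecewiseQuadOff f₂ B₂)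
    (hW : {x | f₁ x ≤ f₂ x}.OrdConnected) :
    IsPiecewiseQuadOff (fun x => min (f₁ x) (f₂ x))
      (B₁ ∪ B₂ ∪ {sInf {x | f₁ x ≤ f₂ x}, sSup {x | f₁ x ≤ f₂ x}}) := by
  intro s hs hdisj
  simp only [coe_union, coe_insert, coe_singleton, Set.disjoint_union_right,
    Set.disjoint_insert_right, Set.disjoint_singleton_right] at hdisj
  obtain ⟨⟨hd₁, hd₂⟩, hinf, hsup⟩ := hdisj
  rcases hW.subset_or_disjoint hs hinf hsup with hsW | hsW
  · exact (h₁ s hs hd₁).congr fun x hx => min_eq_left (hsW hx)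
  · exact (h₂ s hs hd₂).congr fun x hx =>
      min_eq_right (le_of_not_ge (Set.disjoint_left.1 hsW hx))

end IsPiecewiseQuadOff

theorem exists_isPiecewiseQuadOff_inf' {ι : Type*} (A B C : ι → ℝ) (S : Finset ι)
    (hS : S.Nonempty) : ∃ P : Finset ℝ, P.card + 2 ≤ 2 * S.card ∧
      IsPiecewiseQuadOff (fun x => S.inf' hS fun i => A i + B i * x + C i * x ^ 2) P := by
  classical
  induction S using Finset.induction_on_max_value C with
  | empty => exact absurd hS Finset.not_nonempty_empty
  | insert a S ha hmax ih =>
    have hq : IsPiecewiseQuadOff (fun x => A a + B a * x + C a * x ^ 2) ∅ :=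
      fun _ _ _ => ⟨A a, B a, C a, fun _ _ => rfl⟩
    rcases S.eq_empty_or_nonempty with rfl | hS'
    · exact ⟨∅, by simp, by simpa using hq⟩
    obtain ⟨P, hPcard, hP⟩ := ih hS'
    -- `a` has the largest leading coefficient, so it wins on an intersection of intervals
    have hW : {x | A a + B a * x + C a * x ^ 2 ≤
        S.inf' hS' fun i => A i + B i * x + C i * x ^ 2}.OrdConnected := by
      simp only [le_inf'_iff, Set.ofPred_forall]
      exact Set.ordConnected_iInter fun i => Set.ordConnected_iInter fun hi =>
        ordConnected_setOf_quad_le (hmax i hi)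
    refine ⟨_, ?_, by simpa only [inf'_insert (H := hS')] using hq.min hP hW⟩
    grw [card_union_le, card_union_le, card_insert_le, card_singleton, card_insert_of_notMem ha]
    simp only [card_empty]
    omega

namespace IsConstOff

variable {α : Type*} {φ : ℝ → α} {L : Finset ℝ}

/-- Off `L`, `φ x` is determined by the number of points of `L` below `x`. -/
theorem exists_finset_card_le (hφ : IsConstOff φ L) :
    ∃ T : Finset α, T.card ≤ L.card + 1 ∧ ∀ x ∉ L, φ x ∈ T := by
  classical
  set k : ℝ → ℕ := fun x => (L.filter (· < x)).card
  have hk_le : ∀ x ∉ L, ∀ z ∉ L, x ≤ z → k x = k z → φ x = φ z := by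
    intro x _ z hz hxz hkxz
    have hfilter : L.filter (· < x) = L.filter (· < z) :=
      eq_of_subset_of_card_le (monotone_filter_right _ fun _ _ hb => hb.trans_le hxz) hkxz.ge
    refine hφ (Set.Icc x z) Set.ordConnected_Icc ?_ x ⟨le_rfl, hxz⟩ z ⟨hxz, le_rfl⟩
    refine Set.disjoint_left.2 fun b ⟨hxb, hbz⟩ hbL => ?_
    have hbz' : b ∈ L.filter (· < z) :=
      mem_filter.2 ⟨hbL, hbz.lt_of_ne fun h => hz (h ▸ hbL)⟩
    exact (mem_filter.1 (hfilter ▸ hbz')).2.not_ge hxb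
  have hk : ∀ x ∉ L, ∀ z ∉ L, k x = k z → φ x = φ z := fun x hx z hz hkxz =>
    (le_total x z).elim (hk_le x hx z hz · hkxz) fun hzx => (hk_le z hz x hx hzx hkxz.symm).symm
  set rep : ℕ → α := fun i => φ (if h : ∃ x ∉ L, k x = i then h.choose else 0)
  refine ⟨(range (L.card + 1)).image rep, card_image_le.trans (card_range _).le, fun x hx => ?_⟩
  have hex : ∃ x' ∉ L, k x' = k x := ⟨x, hx, rfl⟩
  refine mem_image.2 ⟨k x, mem_range.2 (Nat.lt_succ_of_le (card_filter_le _ _)), ?_⟩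
  simp only [rep, dif_pos hex]
  exact hk _ hex.choose_spec.1 x hx hex.choose_spec.2

theorem exists_isPiecewiseQuadOff (hφ : IsConstOff φ L) {f : ℝ → ℝ} (g : α → ℝ → ℝ)
    (m : ℕ) (hg : ∀ a, ∃ P : Finset ℝ, P.card ≤ m ∧ IsPiecewiseQuadOff (g a) P)
    (hf : ∀ x, f x = g (φ x) x) :
    ∃ P : Finset ℝ, P.card ≤ L.card + (L.card + 1) * m ∧ IsPiecewiseQuadOff f P := by
  classical
  choose P hPcard hP using hg
  obtain ⟨T, hTcard, hT⟩ := hφ.exists_finset_card_le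
  refine ⟨L ∪ T.biUnion P, ?_, fun s hs hdisj => ?_⟩
  · calc (L ∪ T.biUnion P).card ≤ L.card + T.card * m :=
          (card_union_le _ _).trans (add_le_add_right
            (card_biUnion_le_card_mul _ _ _ fun a _ => hPcard a) _)
      _ ≤ L.card + (L.card + 1) * m := by gcongr
  rcases s.eq_empty_or_nonempty with rfl | ⟨x, hx⟩
  · exact ⟨0, 0, 0, fun _ h => h.elim⟩
  rw [coe_union, Set.disjoint_union_right] at hdisj
  have hPx : Disjoint s ↑(P (φ x)) :=
    hdisj.2.mono_right (coe_subset.2 (subset_biUnion_of_mem P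
      (hT x fun hxL => Set.disjoint_left.1 hdisj.1 hx hxL)))
  exact (hP (φ x) s hs hPx).congr fun z hz => by rw [hf, hφ s hs hdisj.1 z hz x hx]

end IsConstOff

noncomputable def breakChain {m : ℕ} (e : Fin m → ℝ) : ℕ → EReal
  | 0 => ⊥
  | i + 1 => if h : i < m then (e ⟨i, h⟩ : EReal) else ⊤

section breakChain

variable {m : ℕ} {e : Fin m → ℝ}

lemma breakChain_lt_iff (he : StrictMono e) (i : Fin m) (j : ℕ) :
    breakChain e j < e i ↔ j ≤ i := by
  rcases j with _ | j
  · simp [breakChain]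
  · by_cases hj : j < m
    · simp [breakChain, hj, he.lt_iff_lt, Fin.lt_def]
    · simp [breakChain, hj]; omega

lemma lt_breakChain_iff (he : StrictMono e) (i : Fin m) (j : ℕ) :
    (e i : EReal) < breakChain e j ↔ i + 1 < j := by
  rcases j with _ | j
  · simp [breakChain]
  · by_cases hj : j < m
    · simp [breakChain, hj, he.lt_iff_lt, Fin.lt_def]
    · simp [breakChain, hj]; omega

lemma breakChain_lt_succ (he : StrictMono e) {j : ℕ} (hj : j ≤ m) :
    breakChain e j < breakChain e (j + 1) := by
  rcases j with _ | j
  · by_cases h0 : 0 < m <;> simp [breakChain, h0]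
  · by_cases hj' : j + 1 < m
    · simp [breakChain, hj', Nat.lt_of_succ_lt hj', he.lt_iff_lt, Fin.lt_def]
    · simp [breakChain, hj', show j < m by omega]

end breakChain

theorem IsPiecewiseQuadOff.isPiecewiseQuad {f : ℝ → ℝ} {B : Finset ℝ} {N : ℕ}
    (h : IsPiecewiseQuadOff f B) (hf : Continuous f) (hN : B.card < N) :
    IsPiecewiseQuad f N := by
  obtain ⟨m, rfl⟩ : ∃ m, N = m + 1 := ⟨N - 1, by omega⟩
  obtain ⟨B', hBB', hcard⟩ := Infinite.exists_superset_card_eq B m (by omega)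
  set e := B'.orderEmbOfFin hcard
  refine ⟨breakChain e, rfl, by simp [breakChain], fun j hj =>
    breakChain_lt_succ e.strictMono (by omega), fun j hj => ?_⟩
  set cell : Set ℝ := (↑) ⁻¹' Set.Ioo (breakChain e j) (breakChain e (j + 1))
  have hdisj : Disjoint cell ↑B' := by
    rw [← range_orderEmbOfFin B' hcard, Set.disjoint_right]
    rintro _ ⟨i, rfl⟩ ⟨h₁, h₂⟩
    rw [breakChain_lt_iff e.strictMono] at h₁
    rw [lt_breakChain_iff e.strictMono] at h₂
    omega
  obtain ⟨c₀, c₁, c₂, hc⟩ :=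
    ((h.mono hBB') cell (Set.ordConnected_Ioo.preimage_mono EReal.coe_strictMono.monotone)
      hdisj).closure hf
  -- continuity carries the quadratic from the open cell to its right endpoint
  refine ⟨c₀, c₁, c₂, fun x h₁ h₂ => hc x ?_⟩
  rw [← EReal.isOpenEmbedding_coe.isOpenMap.preimage_closure_eq_closure_preimage
    continuous_coe_real_ereal, closure_Ioo (breakChain_lt_succ e.strictMono (by omega)).ne]
  exact ⟨h₁.le, h₂⟩

/-- Its infimum is the optimal penalised cost `F(s)` of `y_{1:s}`. -/
def segmentationCosts (γ : ℝ → ℝ → ℝ) (y : ℕ → ℝ) (β : ℝ) (s : ℕ) : Set ℝ :=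
  {a | ∃ (k : ℕ) (τ : ℕ → ℕ), τ 0 = 0 ∧ τ k = s ∧ (∀ i < k, τ i < τ (i + 1)) ∧
    a = ∑ i ∈ range k, (segCost γ y (τ i) (τ (i + 1)) + β)}

section segmentationCosts

variable {γ : ℝ → ℝ → ℝ} {y : ℕ → ℝ} {β : ℝ}

lemma segmentationCosts_nonempty (s : ℕ) : (segmentationCosts γ y β s).Nonempty :=
  ⟨_, s, id, rfl, rfl, fun i _ => i.lt_succ_self, rfl⟩

lemma bddBelow_segmentationCosts (hγ : ∀ a θ, 0 ≤ γ a θ) (s : ℕ) :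
    BddBelow (segmentationCosts γ y β s) := by
  refine ⟨-(s * |β|), ?_⟩
  rintro _ ⟨k, τ, h0, rfl, hτ, rfl⟩
  have hk : ∀ i ≤ k, i ≤ τ i := by
    intro i hi
    induction i with
    | zero => exact Nat.zero_le _
    | succ i ih => exact (ih (by omega)).trans_lt (hτ i (by omega))
  have hterm : ∀ i ∈ range k, -|β| ≤ segCost γ y (τ i) (τ (i + 1)) + β := fun i _ => by
    have : 0 ≤ segCost γ y (τ i) (τ (i + 1)) :=
      Real.iInf_nonneg fun θ => sum_nonneg fun j _ => hγ _ _
    linarith [neg_abs_le β]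
  have hks : (k : ℝ) ≤ τ k := by exact_mod_cast hk k le_rfl
  calc -(τ k * |β|) ≤ -(k * |β|) := by gcongr
    _ = ∑ i ∈ range k, -|β| := by simp
    _ ≤ _ := sum_le_sum hterm

theorem condCost_eq_inf' (hγ : ∀ a θ, 0 ≤ γ a θ) {t : ℕ} (ht : t ≠ 0) (θ : ℝ) :
    condCost γ y β t θ = (range t).inf' (nonempty_range_iff.2 ht) fun s =>
      sInf (segmentationCosts γ y β s) + ∑ j ∈ Ioc s t, γ (y j) θ + β := by
  set M := (range t).inf' (nonempty_range_iff.2 ht) fun s =>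
    sInf (segmentationCosts γ y β s) + ∑ j ∈ Ioc s t, γ (y j) θ + β
  rw [condCost]
  set C := {c : ℝ | ∃ (k : ℕ) (τ : ℕ → ℕ), LastSeg t k τ ∧
    c = (∑ i ∈ range k, (segCost γ y (τ i) (τ (i + 1)) + β)) +
        (∑ j ∈ Ioc (τ k) t, γ (y j) θ) + β}
  have hM : ∀ c ∈ C, M ≤ c := by
    rintro _ ⟨k, τ, ⟨h0, hkt, hτ⟩, rfl⟩
    refine (inf'_le _ (mem_range.2 hkt)).trans ?_
    gcongr
    exact csInf_le (bddBelow_segmentationCosts hγ _) ⟨k, τ, h0, rfl, hτ, rfl⟩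
  have hC : C.Nonempty :=
    ⟨_, 0, fun _ => 0,
      ⟨rfl, Nat.pos_of_ne_zero ht, fun i hi => absurd hi i.not_lt_zero⟩, rfl⟩
  refine le_antisymm (le_inf' _ _ fun s hs => ?_) (le_csInf hC hM)
  have : sInf C - (∑ j ∈ Ioc s t, γ (y j) θ + β) ≤ sInf (segmentationCosts γ y β s) := by
    refine le_csInf (segmentationCosts_nonempty s) ?_
    rintro _ ⟨k, τ, h0, rfl, hτ, rfl⟩
    rw [sub_le_iff_le_add]
    exact csInf_le ⟨M, hM⟩ ⟨k, τ, ⟨h0, mem_range.1 hs, hτ⟩, by ring⟩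
  linarith

end segmentationCosts

section Biweight

variable (K : ℝ) (y : ℕ → ℝ) (β : ℝ) (t : ℕ)

lemma biweight_nonneg_s7 (a θ : ℝ) : 0 ≤ min ((a - θ) ^ 2) (K ^ 2) :=
  le_min (sq_nonneg _) (sq_nonneg _)

lemma isConstOff_biweight_pattern :
    IsConstOff (fun θ => (Ioc 0 t).filter fun j => (y j - θ) ^ 2 ≤ K ^ 2)
      ((Ioc 0 t).biUnion fun j => {y j - K, y j + K}) := by
  intro s hs hdisj x hx z hz
  ext j
  simp only [mem_filter, ← sub_nonpos (a := (y j - _) ^ 2)]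
  refine and_congr_right fun hj =>
    hs.nonpos_iff_nonpos (h := fun θ => (y j - θ) ^ 2 - K ^ 2) (by fun_prop)
      (fun w hw h0 => ?_) hx hz
  have hroot : (w - (y j - K)) * (w - (y j + K)) = 0 := by linear_combination h0
  refine Set.disjoint_left.1 hdisj hw (mem_biUnion.2 ⟨j, hj, ?_⟩)
  rcases mul_eq_zero.1 hroot with h | h
  · simp [← sub_eq_zero.1 h]
  · simp [← sub_eq_zero.1 h]

lemma sum_ite_sq_eq (J P : Finset ℕ) (θ : ℝ) :
    ∑ j ∈ J, (if j ∈ P then (y j - θ) ^ 2 else K ^ 2) =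
      ∑ j ∈ J, (if j ∈ P then y j ^ 2 else K ^ 2) +
      (∑ j ∈ J, if j ∈ P then -2 * y j else 0) * θ +
      (∑ j ∈ J, if j ∈ P then 1 else 0) * θ ^ 2 := by
  rw [sum_mul, sum_mul, ← sum_add_distrib, ← sum_add_distrib]
  refine sum_congr rfl fun j _ => ?_
  split_ifs <;> ring

theorem exists_isPiecewiseQuadOff_condCost_biweight (ht : t ≠ 0) :
    ∃ P : Finset ℝ, P.card < (2 * t + 1) * (2 * t - 1) ∧
      IsPiecewiseQuadOff (condCost (fun a θ => min ((a - θ) ^ 2) (K ^ 2)) y β t) P := by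
  classical
  set γ : ℝ → ℝ → ℝ := fun a θ => min ((a - θ) ^ 2) (K ^ 2)
  have hne := nonempty_range_iff.2 ht
  set G : ℕ → ℝ := fun s => sInf (segmentationCosts γ y β s)
  -- `Q_t` with the losses in the set `P` in their quadratic regime and the others at `K²`
  set g : Finset ℕ → ℝ → ℝ := fun P θ => (range t).inf' hne fun s =>
    G s + ∑ j ∈ Ioc s t, (if j ∈ P then (y j - θ) ^ 2 else K ^ 2) + β
  have hg : ∀ P, ∃ B : Finset ℝ, B.card ≤ 2 * t - 2 ∧ IsPiecewiseQuadOff (g P) B := by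
    intro P
    obtain ⟨B, hB, hBq⟩ := exists_isPiecewiseQuadOff_inf'
      (fun s => G s + ∑ j ∈ Ioc s t, (if j ∈ P then y j ^ 2 else K ^ 2) + β)
      (fun s => ∑ j ∈ Ioc s t, if j ∈ P then -2 * y j else 0)
      (fun s => ∑ j ∈ Ioc s t, if j ∈ P then 1 else 0) (range t) hne
    refine ⟨B, by rw [card_range] at hB; omega, ?_⟩
    convert hBq using 2 with θ
    exact inf'_congr _ rfl fun s _ => by rw [sum_ite_sq_eq]; ring
  have hf : ∀ θ, condCost γ y β t θ =
      g ((Ioc 0 t).filter fun j => (y j - θ) ^ 2 ≤ K ^ 2) θ := by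
    intro θ
    rw [condCost_eq_inf' (biweight_nonneg_s7 K) ht]
    refine inf'_congr _ rfl fun s _ => ?_
    congr 2
    refine sum_congr rfl fun j hj => ?_
    have hj0 : j ∈ Ioc 0 t := Ioc_subset_Ioc_left (Nat.zero_le s) hj
    simp only [mem_filter, hj0, true_and]
    split_ifs with h
    · exact min_eq_left h
    · exact min_eq_right (le_of_not_ge h)
  obtain ⟨P, hP, hPq⟩ :=
    (isConstOff_biweight_pattern K y t).exists_isPiecewiseQuadOff g _ hg hf
  have hL : ((Ioc 0 t).biUnion fun j => ({y j - K, y j + K} : Finset ℝ)).card ≤ 2 * t := by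
    simpa [mul_comm] using card_biUnion_le_card_mul (Ioc 0 t) _ 2 fun _ _ => card_le_two
  refine ⟨P, hP.trans_lt ?_, hPq⟩
  obtain ⟨t, rfl⟩ : ∃ t', t = t' + 1 := ⟨t - 1, by omega⟩
  have h₂ : 2 * (t + 1) - 2 = 2 * t := by omega
  have h₁ : 2 * (t + 1) - 1 = 2 * t + 1 := by omega
  rw [h₁, h₂]
  nlinarith

lemma continuous_condCost_biweight (ht : t ≠ 0) :
    Continuous (condCost (fun a θ => min ((a - θ) ^ 2) (K ^ 2)) y β t) := by
  rw [funext (condCost_eq_inf' (biweight_nonneg_s7 K) ht)]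
  exact Continuous.finset_inf'_apply _ fun s _ => by fun_prop

end Biweight

theorem condCost_piecewise_quad_biweight_general
    (K : ℝ)
    (y : ℕ → ℝ) (β : ℝ)
    (t : ℕ) (ht : 1 ≤ t) :
    IsPiecewiseQuad
      (fun θ => condCost (fun a θ' => min ((a - θ') ^ 2) (K ^ 2)) y β t θ)
      ((2 * t + 1) * (2 * t - 1)) := by
  obtain ⟨P, hP, hPq⟩ := exists_isPiecewiseQuadOff_condCost_biweight K y β t (by omega)
  exact hPq.isPiecewiseQuad (continuous_condCost_biweight K y β t (by omega)) hP

/-- For the biweight loss, `θ ↦ Q_t(θ)` is piecewise quadratic on at most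
`(2t+1)(2t−1)` intervals; in particular `O(t²)` intervals suffice. -/
theorem condCost_piecewise_quad_biweight
    (K : ℝ) (hK : 0 < K)
    (n : ℕ) (y : ℕ → ℝ) (β : ℝ) (hβ : 0 < β)
    (t : ℕ) (ht : 1 ≤ t) (htn : t ≤ n) :
    IsPiecewiseQuad
      (fun θ => condCost (fun a θ' => min ((a - θ') ^ 2) (K ^ 2)) y β t θ)
      ((2 * t + 1) * (2 * t - 1)) :=
  condCost_piecewise_quad_biweight_general K y β t ht
end
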